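/- For all integers n ≥ 100, writing n = 5m + k with 0 ≤ k ≤ 4 (so m ≥ 20), and letting r ∈ {0,1,2} be the remainder of m − k² + 1 modulo 3, α = (m − 4k² + 15k − 14 − r)/3, and γ = 2m − 22k − (4m − 16k² − 68 + 5r)/3, we have: α and γ are nonnegative integers, and the cone L₊^{7m+k} ⊕ L₊^{m+3k−4} ⊕ (α copies of L₊^4) ⊕ (r copies of L₊^3) ⊕ ℝ₊^γ has total dimension 2n and total Lyapunov rank 2·f(n), where f(x) = (x²−x+2)/2. -/
import Mathlib


def lyap (m : ℤ) : ℤ := (m^2 - m + 2) / 2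

lemma two_lyap (a : ℤ) : 2 * lyap a = a^2 - a + 2 := by
  have h : (2:ℤ) ∣ a^2 - a + 2 := by
    obtain ⟨c, hc⟩ := Int.even_mul_succ_self (a - 1)
    exact ⟨c + 1, by linarith [hc, sq_nonneg a]⟩
  unfold lyap
  exact Int.mul_ediv_cancel' h

theorem LnLn_simulacrum (n m k r α γ : ℤ) (hn : 100 ≤ n)
    (hnmk : n = 5 * m + k) (hk0 : 0 ≤ k) (hk4 : k ≤ 4)
    (hr : r = (m - k^2 + 1) % 3)
    (hα : α = (m - 4 * k^2 + 15 * k - 14 - r) / 3)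
    (hγ : γ = 2 * m - 22 * k - (4 * m - 16 * k^2 - 68 + 5 * r) / 3) :
    (3 ∣ (m - 4 * k^2 + 15 * k - 14 - r)) ∧
    (3 ∣ (4 * m - 16 * k^2 - 68 + 5 * r)) ∧
    0 ≤ α ∧ 0 ≤ γ ∧
    (7 * m + k) + (m + 3 * k - 4) + 4 * α + 3 * r + γ = 2 * n ∧
    lyap (7 * m + k) + lyap (m + 3 * k - 4) + α * lyap 4 + r * lyap 3 + γ
      = 2 * lyap n := by
  have hr0 : 0 ≤ r := hr ▸ Int.emod_nonneg _ (by norm_num)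
  have hr3 : r < 3 := hr ▸ Int.emod_lt_of_pos _ (by norm_num)
  have hdr : (3:ℤ) ∣ m - k^2 + 1 - r := Int.dvd_self_sub_of_emod_eq hr.symm
  obtain ⟨s, hs⟩ := hdr
  have hd1 : (3:ℤ) ∣ m - 4 * k^2 + 15 * k - 14 - r :=
    ⟨s - k^2 + 5 * k - 5, by linarith⟩
  have hd2 : (3:ℤ) ∣ 4 * m - 16 * k^2 - 68 + 5 * r :=
    ⟨4 * s - 4 * k^2 - 24 + 3 * r, by linarith⟩
  have h3a : 3 * α = m - 4 * k^2 + 15 * k - 14 - r := by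
    rw [hα]; exact Int.mul_ediv_cancel' hd1
  have h3g : 3 * γ = 2 * m + 16 * k^2 - 66 * k + 68 - 5 * r := by
    have h2 := Int.mul_ediv_cancel' hd2
    rw [hγ]; linarith
  have hm : 20 ≤ m := by nlinarith
  have hα0 : 0 ≤ α := by nlinarith [mul_nonneg hk0 (by linarith : (0:ℤ) ≤ 4 - k)]
  have hγ0 : 0 ≤ γ := by
    rcases le_or_gt k 2 with h | h
    · nlinarith
    · nlinarith
  refine ⟨hd1, hd2, hα0, hγ0, by linarith, ?_⟩
  have l4 : lyap 4 = 7 := by norm_num [lyap]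
  have l3 : lyap 3 = 4 := by norm_num [lyap]
  rw [l4, l3]
  have e1 := two_lyap (7 * m + k)
  have e2 := two_lyap (m + 3 * k - 4)
  have e3 := two_lyap n
  have big : 6 * (lyap (7 * m + k) + lyap (m + 3 * k - 4) + α * 7 + r * 4 + γ)
      = 6 * (2 * lyap n) := by
    subst hnmk
    linear_combination 3 * e1 + 3 * e2 - 6 * e3 + 14 * h3a + 2 * h3g
  linarith
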